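/- Let G be a finite simple graph on vertex set {x_{11}, …, x_{n1}}, let m_1, …, m_n ≥ 2 be integers, and let G_1, …, G_n be connected finite simple graphs with V(G_i) = {x_{i1}, …, x_{im_i}}. If the attachment graph G(G_1, …, G_n) is shellable, then G_i is shellable for every i = 1, …, n. -/

import Mathlib

variable {V : Type*} [DecidableEq V]

/-- `S` is an independent set of the induced subgraph of `G` on the vertex set `A`. -/
def IsIndepIn (G : SimpleGraph V) (A S : Finset V) : Prop :=
  S ⊆ A ∧ ∀ u ∈ S, ∀ v ∈ S, ¬G.Adj u v

/-- `S` is a maximal independent set of the induced subgraph of `G` on the vertex set `A`. -/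
def IsMaxIndepIn (G : SimpleGraph V) (A S : Finset V) : Prop :=
  IsIndepIn G A S ∧ ∀ T, IsIndepIn G A T → S ⊆ T → S = T

/-- The induced subgraph of `G` on `A` is unmixed: all maximal independent sets
have the same cardinality. -/
def UnmixedOn (G : SimpleGraph V) (A : Finset V) : Prop :=
  ∀ S T, IsMaxIndepIn G A S → IsMaxIndepIn G A T → S.card = T.card

open scoped Classical in
/-- The vertex set `A \ N_G[x]`. -/
noncomputable def delClosedNbhd (G : SimpleGraph V) (A : Finset V) (x : V) : Finset V :=
  A.filter fun y => y ≠ x ∧ ¬G.Adj x y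

/-- The induced subgraph of `G` on `A` is vertex decomposable. -/
inductive VertexDecomposableOn (G : SimpleGraph V) : Finset V → Prop
  | edgeless (A : Finset V) (h : ∀ u ∈ A, ∀ v ∈ A, ¬G.Adj u v) : VertexDecomposableOn G A
  | shed (A : Finset V) (x : V) (hx : x ∈ A)
      (hlink : VertexDecomposableOn G (delClosedNbhd G A x))
      (hdel : VertexDecomposableOn G (A.erase x))
      (hexch : ∀ S, IsIndepIn G (delClosedNbhd G A x) S →
        ∃ y ∈ A, G.Adj x y ∧ IsIndepIn G (A.erase x) (insert y S)) :
      VertexDecomposableOn G A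

/-- `x` is a shedding vertex of the induced subgraph of `G` on `A`. -/
def IsSheddingVertexOn (G : SimpleGraph V) (A : Finset V) (x : V) : Prop :=
  x ∈ A ∧
  VertexDecomposableOn G (delClosedNbhd G A x) ∧
  VertexDecomposableOn G (A.erase x) ∧
  ∀ S, IsIndepIn G (delClosedNbhd G A x) S →
    ∃ y ∈ A, G.Adj x y ∧ IsIndepIn G (A.erase x) (insert y S)

/-- The independence complex of the induced subgraph of `G` on `A` is shellable:
there is an ordering `F 0, F 1, …` of its facets (the maximal independent sets) such
that for every `i`, every face of the subcomplex `(⋃ j < i, ⟨F j⟩) ∩ ⟨F i⟩` is contained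
in a face of that subcomplex of cardinality `(F i).card - 1` (i.e. the subcomplex is
pure of dimension `dim (F i) - 1`). -/
def ShellableOn (G : SimpleGraph V) (A : Finset V) : Prop :=
  ∃ (t : ℕ) (F : Fin t → Finset V),
    Function.Injective F ∧
    (∀ S, IsMaxIndepIn G A S ↔ ∃ i, F i = S) ∧
    ∀ i : Fin t, ∀ S : Finset V, S ⊆ F i → (∃ j, j < i ∧ S ⊆ F j) →
      ∃ S' : Finset V, S ⊆ S' ∧ S' ⊆ F i ∧ (∃ j, j < i ∧ S' ⊆ F j) ∧
        S'.card = (F i).card - 1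

/-- A graph is chordal if every cycle of length at least four has a chord, i.e. an
edge of the graph joining two vertices of the cycle that is not an edge of the cycle. -/
def IsChordal (G : SimpleGraph V) : Prop :=
  ∀ (x : V) (w : G.Walk x x), w.IsCycle → 4 ≤ w.length →
    ∃ u v, u ∈ w.support ∧ v ∈ w.support ∧ G.Adj u v ∧ s(u, v) ∉ w.edges

/-- The induced subgraph of `G` on `A` is a cycle graph on `m` vertices. -/
def IsCycleGraphOn (G : SimpleGraph V) (A : Finset V) (m : ℕ) : Prop :=
  (∀ u v, G.Adj u v → u ∈ A ∧ v ∈ A) ∧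
  Nonempty (G.induce (A : Set V) ≃g SimpleGraph.cycleGraph m)

/-- The independence number of the induced subgraph of `G` on `A`. -/
noncomputable def indepNumOn (G : SimpleGraph V) (A : Finset V) : ℕ :=
  sSup {k | ∃ S, IsIndepIn G A S ∧ S.card = k}

/-! Links of faces in a shellable complex are shellable, so it suffices to exhibit `Δ_{G_i}` as a
link. For `j ≠ i` pick a maximal independent set `T_j` of `G_j - x_{j1}` containing a neighbour
of `x_{j1}` (one exists as `G_j` is connected with at least two vertices). Then `T_j` avoids the
root and dominates `G_j`, so `S = ⋃_{j ≠ i} T_j` is independent in the attachment graph and every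
vertex outside `G_i` lies in or next to `S`, while no vertex of `G_i` does. Hence the link of `S`
is the independence complex of the attachment graph restricted to `V(G_i)`, which is `G_i` since
the edges of `G` meet `V(G_i)` only in `x_{i1}`. -/

section IndependentSets

variable {G G' : SimpleGraph V} {A S T : Finset V}

theorem IsIndepIn.insert (hT : IsIndepIn G A T) {z : V} (hz : z ∈ A)
    (hzT : ∀ s ∈ T, ¬G.Adj s z) : IsIndepIn G A (insert z T) := by
  refine ⟨Finset.insert_subset hz hT.1, ?_⟩
  simp only [Finset.mem_insert]
  rintro u (rfl | hu) v (rfl | hv)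
  · exact G.irrefl
  · exact fun h => hzT v hv h.symm
  · exact hzT u hu
  · exact hT.2 u hu v hv

theorem IsIndepIn.exists_isMaxIndepIn_superset (hS : IsIndepIn G A S) :
    ∃ T, S ⊆ T ∧ IsMaxIndepIn G A T := by
  classical
  obtain ⟨T, hT, hmax⟩ := Finset.exists_max_image
    (A.powerset.filter fun T => IsIndepIn G A T ∧ S ⊆ T) Finset.card
    ⟨S, by simp [hS.1, hS]⟩
  simp only [Finset.mem_filter, Finset.mem_powerset] at hT hmax
  refine ⟨T, hT.2.2, hT.2.1, fun T' hT' hTT' => Finset.eq_of_subset_of_card_le hTT' ?_⟩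
  exact hmax T' ⟨hT'.1, hT', hT.2.2.trans hTT'⟩

theorem IsMaxIndepIn.mem_or_exists_adj (hT : IsMaxIndepIn G A T) {z : V} (hz : z ∈ A) :
    z ∈ T ∨ ∃ s ∈ T, G.Adj s z := by
  by_contra! h
  have := hT.2 _ (hT.1.insert hz h.2) (Finset.subset_insert z T)
  exact h.1 (this ▸ Finset.mem_insert_self z T)

theorem exists_dominating_isIndepIn_erase {x y : V} (hy : y ∈ A) (hxy : G.Adj x y) :
    ∃ T, IsIndepIn G (A.erase x) T ∧ ∀ z ∈ A, z ∈ T ∨ ∃ s ∈ T, G.Adj s z := by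
  have hy' : IsIndepIn G (A.erase x) {y} :=
    ⟨by simpa using Finset.mem_erase.mpr ⟨hxy.ne.symm, hy⟩, by simp⟩
  obtain ⟨T, hyT, hT⟩ := hy'.exists_isMaxIndepIn_superset
  refine ⟨T, hT.1, fun z hz => ?_⟩
  by_cases hzx : z = x
  · exact .inr ⟨y, hyT (Finset.mem_singleton_self y), hzx ▸ hxy.symm⟩
  · exact hT.mem_or_exists_adj (Finset.mem_erase.mpr ⟨hzx, hz⟩)

omit [DecidableEq V] in
theorem exists_adj_of_connected_induce (hconn : (G.induce (A : Set V)).Connected)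
    (hA : 2 ≤ A.card) {x : V} (hx : x ∈ A) : ∃ y ∈ A, G.Adj x y := by
  have : Nontrivial (A : Set V) :=
    Set.nontrivial_coe_sort.mpr (Finset.one_lt_card_iff_nontrivial.mp hA)
  obtain ⟨⟨y, hy⟩, hxy⟩ := hconn.preconnected.exists_adj_of_nontrivial ⟨x, hx⟩
  exact ⟨y, hy, hxy⟩

omit [DecidableEq V] in
theorem isMaxIndepIn_congr (h : ∀ S, IsIndepIn G A S ↔ IsIndepIn G' A S) (S : Finset V) :
    IsMaxIndepIn G A S ↔ IsMaxIndepIn G' A S := by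
  simp only [IsMaxIndepIn, h]

omit [DecidableEq V] in
theorem isIndepIn_congr (h : ∀ u ∈ A, ∀ v ∈ A, G.Adj u v ↔ G'.Adj u v) (S : Finset V) :
    IsIndepIn G A S ↔ IsIndepIn G' A S := by
  refine and_congr_right fun hS => forall₂_congr fun u hu => forall₂_congr fun v hv => ?_
  rw [h u (hS hu) v (hS hv)]

end IndependentSets

section Shelling

/-- The shelling condition of `ShellableOn` on a sequence of facets. -/
def IsShellingOrder {t : ℕ} (F : Fin t → Finset V) : Prop :=
  ∀ i : Fin t, ∀ S : Finset V, S ⊆ F i → (∃ j, j < i ∧ S ⊆ F j) →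
    ∃ S' : Finset V, S ⊆ S' ∧ S' ⊆ F i ∧ (∃ j, j < i ∧ S' ⊆ F j) ∧
      S'.card = (F i).card - 1

/-- The facets of the link of a face `S₀` are the `F \ S₀` for the facets `F ⊇ S₀`; listed in
the order inherited from a shelling, they form a shelling. -/
theorem IsShellingOrder.link {t u : ℕ} {F : Fin t → Finset V} (hF : IsShellingOrder F)
    {S₀ : Finset V} {g : Fin u → Fin t} (hg : StrictMono g) (hS₀ : ∀ k, S₀ ⊆ F (g k))
    (hrange : ∀ j, S₀ ⊆ F j → ∃ k, g k = j) : IsShellingOrder fun k => F (g k) \ S₀ := by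
  rintro k S hSk ⟨l, hlk, hSl⟩
  obtain ⟨S', hSS', hS'F, ⟨j, hjk, hS'j⟩, hcard⟩ :=
    hF (g k) (S ∪ S₀) (Finset.union_subset (hSk.trans Finset.sdiff_subset) (hS₀ k))
      ⟨g l, hg hlk, Finset.union_subset (hSl.trans Finset.sdiff_subset) (hS₀ l)⟩
  have hS₀S' : S₀ ⊆ S' := Finset.subset_union_right.trans hSS'
  obtain ⟨k', rfl⟩ := hrange j (hS₀S'.trans hS'j)
  refine ⟨S' \ S₀, ?_, Finset.sdiff_subset_sdiff hS'F le_rfl,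
    ⟨k', hg.lt_iff_lt.mp hjk, Finset.sdiff_subset_sdiff hS'j le_rfl⟩, ?_⟩
  · intro z hz
    exact Finset.mem_sdiff.mpr ⟨hSS' (Finset.mem_union_left _ hz), (Finset.mem_sdiff.mp (hSk hz)).2⟩
  · have := Finset.card_le_card hS₀S'
    have := Finset.card_le_card hS'F
    simp only [Finset.card_sdiff_of_subset hS₀S', Finset.card_sdiff_of_subset (hS₀ k)]
    omega

open scoped Classical in
/-- The vertex set whose independence complex is the link of the face `S` of the independence
complex of `G` on `A`. -/
noncomputable def linkOn (G : SimpleGraph V) (A S : Finset V) : Finset V :=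
  A.filter fun y => y ∉ S ∧ ∀ s ∈ S, ¬G.Adj s y

variable {G G' : SimpleGraph V} {A S₀ T : Finset V}

theorem mem_linkOn {y : V} : y ∈ linkOn G A S₀ ↔ y ∈ A ∧ y ∉ S₀ ∧ ∀ s ∈ S₀, ¬G.Adj s y := by
  simp [linkOn]

theorem isIndepIn_linkOn_iff (hS₀ : IsIndepIn G A S₀) :
    IsIndepIn G (linkOn G A S₀) T ↔ Disjoint T S₀ ∧ IsIndepIn G A (T ∪ S₀) := by
  simp only [IsIndepIn, Finset.subset_iff, mem_linkOn, Finset.mem_union, Finset.disjoint_left]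
  constructor
  · rintro ⟨hTA, hT⟩
    refine ⟨fun t ht => (hTA ht).2.1, fun z hz => hz.elim (fun h => (hTA h).1) (fun h => hS₀.1 h),
      ?_⟩
    rintro u (hu | hu) v (hv | hv)
    · exact hT u hu v hv
    · exact fun h => (hTA hu).2.2 v hv h.symm
    · exact (hTA hv).2.2 u hu
    · exact hS₀.2 u hu v hv
  · rintro ⟨hdisj, hTA, hT⟩
    exact ⟨fun t ht => ⟨hTA (.inl ht), hdisj ht, fun s hs => hT s (.inr hs) t (.inl ht)⟩,
      fun u hu v hv => hT u (.inl hu) v (.inl hv)⟩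

theorem isMaxIndepIn_linkOn_iff (hS₀ : IsIndepIn G A S₀) :
    IsMaxIndepIn G (linkOn G A S₀) T ↔ Disjoint T S₀ ∧ IsMaxIndepIn G A (T ∪ S₀) := by
  simp only [IsMaxIndepIn, isIndepIn_linkOn_iff hS₀]
  constructor
  · rintro ⟨⟨hdisj, hT⟩, hmax⟩
    refine ⟨hdisj, hT, fun M hM hTM => ?_⟩
    have hS₀M : S₀ ⊆ M := Finset.subset_union_right.trans hTM
    have hTM' : T ⊆ M \ S₀ := fun z hz =>
      Finset.mem_sdiff.mpr ⟨hTM (Finset.mem_union_left _ hz), Finset.disjoint_left.mp hdisj hz⟩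
    rw [hmax (M \ S₀) ⟨Finset.sdiff_disjoint, by rwa [Finset.sdiff_union_of_subset hS₀M]⟩ hTM',
      Finset.sdiff_union_of_subset hS₀M]
  · rintro ⟨hdisj, hT, hmax⟩
    refine ⟨⟨hdisj, hT⟩, fun T' ⟨hdisj', hT'⟩ hTT' => ?_⟩
    have := hmax _ hT' (Finset.union_subset_union hTT' le_rfl)
    rw [← Finset.union_sdiff_cancel_right hdisj, this, Finset.union_sdiff_cancel_right hdisj']

theorem ShellableOn.link (h : ShellableOn G A) (hS₀ : IsIndepIn G A S₀) :
    ShellableOn G (linkOn G A S₀) := by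
  classical
  obtain ⟨t, F, hinj, hfacets, hshell⟩ := h
  set s := Finset.univ.filter fun j => S₀ ⊆ F j
  let g := s.orderEmbOfFin rfl
  have hsub : ∀ k, S₀ ⊆ F (g k) := fun k => (Finset.mem_filter.mp (s.orderEmbOfFin_mem rfl k)).2
  have hrange : ∀ j, S₀ ⊆ F j → ∃ k, g k = j := fun j hj => by
    simpa [g, ← Set.mem_range, Finset.range_orderEmbOfFin, s] using hj
  refine ⟨s.card, fun k => F (g k) \ S₀, fun k l hkl => ?_, fun T => ?_,
    IsShellingOrder.link hshell g.strictMono hsub hrange⟩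
  · have := congrArg (· ∪ S₀) hkl
    simp only [Finset.sdiff_union_of_subset (hsub _)] at this
    exact g.injective (hinj this)
  · rw [isMaxIndepIn_linkOn_iff hS₀, hfacets]
    constructor
    · rintro ⟨hdisj, j, hj⟩
      obtain ⟨k, rfl⟩ := hrange j (hj ▸ Finset.subset_union_right)
      exact ⟨k, by simp only [hj, Finset.union_sdiff_cancel_right hdisj]⟩
    · rintro ⟨k, rfl⟩
      exact ⟨Finset.sdiff_disjoint, g k, (Finset.sdiff_union_of_subset (hsub k)).symm⟩

omit [DecidableEq V] in
theorem ShellableOn.congr_adj (h : ShellableOn G A)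
    (hadj : ∀ u ∈ A, ∀ v ∈ A, G.Adj u v ↔ G'.Adj u v) : ShellableOn G' A := by
  obtain ⟨t, F, hinj, hfacets, hshell⟩ := h
  exact ⟨t, F, hinj, fun S => (isMaxIndepIn_congr (isIndepIn_congr hadj) S).symm.trans
    (hfacets S), hshell⟩

end Shelling

/-- `Gs` is attached to the base graph `G` along the roots `x i ∈ B i`: the hypotheses on
`G(G_1, …, G_n)` with `G_i` living on `B i = {x_{i1}, …, x_{im_i}}` and `x i = x_{i1}`. -/
structure IsAttachment {ι : Type*} (G : SimpleGraph V) (Gs : ι → SimpleGraph V) (x : ι → V)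
    (B : ι → Finset V) : Prop where
  adj_base : ∀ u v, G.Adj u v → (∃ i, u = x i) ∧ (∃ j, v = x j)
  root_mem : ∀ i, x i ∈ B i
  disjoint : ∀ i j, i ≠ j → Disjoint (B i) (B j)
  adj_piece : ∀ i, ∀ u v, (Gs i).Adj u v → u ∈ B i ∧ v ∈ B i

namespace IsAttachment

variable {ι : Type*} {G : SimpleGraph V} {Gs : ι → SimpleGraph V} {x : ι → V}
  {B : ι → Finset V} {u v : V} {i j : ι}

omit [DecidableEq V] in
theorem eq_of_mem_of_mem (hA : IsAttachment G Gs x B) (hi : u ∈ B i) (hj : u ∈ B j) : i = j := by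
  by_contra hij
  exact Finset.disjoint_left.mp (hA.disjoint i j hij) hi hj

omit [DecidableEq V] in
theorem adj_of_sup_adj (hA : IsAttachment G Gs x B) (hu : u ∈ B j) (hux : u ≠ x j)
    (h : (G ⊔ ⨆ i, Gs i).Adj u v) : (Gs j).Adj u v := by
  rcases (SimpleGraph.sup_adj _ _ _ _).mp h with hG | hGs
  · obtain ⟨⟨a, rfl⟩, -⟩ := hA.adj_base u v hG
    exact absurd (hA.eq_of_mem_of_mem (hA.root_mem a) hu ▸ rfl) hux
  · obtain ⟨l, hl⟩ := SimpleGraph.iSup_adj.mp hGs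
    exact hA.eq_of_mem_of_mem (hA.adj_piece l u v hl).1 hu ▸ hl

theorem sup_adj_iff (hA : IsAttachment G Gs x B) (hu : u ∈ B i) (hv : v ∈ B i) :
    (G ⊔ ⨆ i, Gs i).Adj u v ↔ (Gs i).Adj u v := by
  refine ⟨fun h => ?_, fun h => .inr (SimpleGraph.iSup_adj.mpr ⟨i, h⟩)⟩
  by_cases hux : u = x i
  · have hvx : v ≠ x i := hux ▸ h.ne.symm
    exact (hA.adj_of_sup_adj hv hvx h.symm).symm
  · exact hA.adj_of_sup_adj hu hux h

variable [Fintype ι] {T : ι → Finset V}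

theorem isIndepIn_biUnion (hA : IsAttachment G Gs x B)
    (hT : ∀ j, IsIndepIn (Gs j) ((B j).erase (x j)) (T j)) (s : Finset ι) :
    IsIndepIn (G ⊔ ⨆ i, Gs i) (Finset.univ.biUnion B) (s.biUnion T) := by
  have hTB : ∀ j, T j ⊆ B j := fun j => (hT j).1.trans (Finset.erase_subset _ _)
  refine ⟨Finset.biUnion_subset_biUnion_of_subset_left _ (Finset.subset_univ s) |>.trans
    (Finset.biUnion_mono fun j _ => hTB j), ?_⟩
  simp only [Finset.mem_biUnion]
  rintro u ⟨j, -, hu⟩ v ⟨k, -, hv⟩ h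
  have huv := hA.adj_of_sup_adj (hTB j hu) (Finset.ne_of_mem_erase ((hT j).1 hu)) h
  obtain rfl := hA.eq_of_mem_of_mem (hA.adj_piece j u v huv).2 (hTB k hv)
  exact (hT j).2 u hu v hv huv

theorem linkOn_biUnion_erase [DecidableEq ι] (hA : IsAttachment G Gs x B)
    (hT : ∀ j, IsIndepIn (Gs j) ((B j).erase (x j)) (T j))
    (hdom : ∀ j, ∀ z ∈ B j, z ∈ T j ∨ ∃ s ∈ T j, (Gs j).Adj s z) (i : ι) :
    linkOn (G ⊔ ⨆ i, Gs i) (Finset.univ.biUnion B) ((Finset.univ.erase i).biUnion T) = B i := by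
  have hTB : ∀ j, T j ⊆ B j := fun j => (hT j).1.trans (Finset.erase_subset _ _)
  ext z
  simp only [mem_linkOn, Finset.mem_biUnion, Finset.mem_univ, Finset.mem_erase, true_and,
    not_exists, not_and, forall_exists_index, and_imp, forall_const]
  constructor
  · rintro ⟨⟨j, hzj⟩, hzS, hzadj⟩
    by_contra hzi
    have hji : j ≠ i := fun h => hzi (h ▸ hzj)
    rcases hdom j z hzj with hzT | ⟨s, hs, hsz⟩
    · exact hzS j hji hzT
    · exact hzadj s j hji hs (.inr (SimpleGraph.iSup_adj.mpr ⟨j, hsz⟩))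
  · intro hzi
    refine ⟨⟨i, hzi⟩, fun j hji hzT => hji (hA.eq_of_mem_of_mem (hTB j hzT) hzi), ?_⟩
    intro s j hji hs h
    have hsz := hA.adj_of_sup_adj (hTB j hs) (Finset.ne_of_mem_erase ((hT j).1 hs)) h
    exact hji (hA.eq_of_mem_of_mem (hA.adj_piece j s z hsz).2 hzi)

end IsAttachment

theorem stmt_3_general {V : Type*} [DecidableEq V] (n : ℕ) (x : Fin n → V) (B : Fin n → Finset V)
    (G : SimpleGraph V) (Gs : Fin n → SimpleGraph V)
    (hGsupp : ∀ u v, G.Adj u v → (∃ i, u = x i) ∧ (∃ j, v = x j))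
    (hxB : ∀ i, x i ∈ B i)
    (hBcard : ∀ i, 2 ≤ (B i).card)
    (hBdisj : ∀ i j, i ≠ j → Disjoint (B i) (B j))
    (hGssupp : ∀ i, ∀ u v, (Gs i).Adj u v → u ∈ B i ∧ v ∈ B i)
    (hconn : ∀ i, ((Gs i).induce ((B i : Set V))).Connected)
    (hsh : ShellableOn (G ⊔ ⨆ i, Gs i) (Finset.univ.biUnion B)) :
    ∀ i, ShellableOn (Gs i) (B i) := by
  intro i
  have hA : IsAttachment G Gs x B := ⟨hGsupp, hxB, hBdisj, hGssupp⟩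
  have hT : ∀ j, ∃ T, IsIndepIn (Gs j) ((B j).erase (x j)) T ∧
      ∀ z ∈ B j, z ∈ T ∨ ∃ s ∈ T, (Gs j).Adj s z := fun j => by
    obtain ⟨y, hy, hxy⟩ := exists_adj_of_connected_induce (hconn j) (hBcard j) (hxB j)
    exact exists_dominating_isIndepIn_erase hy hxy
  choose T hTind hTdom using hT
  have hlink := hsh.link (hA.isIndepIn_biUnion hTind (Finset.univ.erase i))
  rw [hA.linkOn_biUnion_erase hTind hTdom i] at hlink
  exact hlink.congr_adj fun u hu v hv => hA.sup_adj_iff hu hv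

/-- If the attachment graph `G(G_1, …, G_n)` is shellable, then each `Gs i`
is shellable. -/
theorem stmt_3 {V : Type*} [DecidableEq V] (n : ℕ) (x : Fin n → V) (B : Fin n → Finset V)
    (G : SimpleGraph V) (Gs : Fin n → SimpleGraph V)
    (hxinj : Function.Injective x)
    (hGsupp : ∀ u v, G.Adj u v → (∃ i, u = x i) ∧ (∃ j, v = x j))
    (hxB : ∀ i, x i ∈ B i)
    (hBcard : ∀ i, 2 ≤ (B i).card)
    (hBdisj : ∀ i j, i ≠ j → Disjoint (B i) (B j))
    (hGssupp : ∀ i, ∀ u v, (Gs i).Adj u v → u ∈ B i ∧ v ∈ B i)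
    (hconn : ∀ i, ((Gs i).induce ((B i : Set V))).Connected)
    (hsh : ShellableOn (G ⊔ ⨆ i, Gs i) (Finset.univ.biUnion B)) :
    ∀ i, ShellableOn (Gs i) (B i) :=
  stmt_3_general n x B G Gs hGsupp hxB hBcard hBdisj hGssupp hconn hsh
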